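/- Let S be an n×n, V an n×m1, and V̄ an n×m2 complex matrix, let ε ∈ {1, −1}, and suppose the n×n matrices K and K̄ are Hermitian (K† = K, K̄† = K̄) and satisfy the Lyapunov equations S K + K S† = V V† and S† K̄ + K̄ S = V̄ V̄†. For (x,t) ∈ ℝ² set Ξ(x,t) = exp(−x S − i t S²), and assume that Ξ(x,t)†⁻¹ − ε K̄ Ξ(x,t) K is invertible for all (x,t) ∈ ℝ². Then q = V† (Ξ†⁻¹ − ε K̄ Ξ K)⁻¹ V̄ is a smooth m1×m2 matrix-valued function on ℝ² satisfying the matrix NLS equation i q_t + q_xx − 2 ε q q† q = 0. -/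

import Mathlib

open Matrix

attribute [local instance] Matrix.normedAddCommGroup Matrix.normedSpace

/-- Partial derivative with respect to the first (space) variable. -/
noncomputable def pdx {α : Type*} [NormedAddCommGroup α] [NormedSpace ℝ α]
    (f : ℝ → ℝ → α) : ℝ → ℝ → α :=
  fun x t => deriv (fun y => f y t) x

/-- Partial derivative with respect to the second (time) variable. -/
noncomputable def pdt {α : Type*} [NormedAddCommGroup α] [NormedSpace ℝ α]
    (f : ℝ → ℝ → α) : ℝ → ℝ → α :=
  fun x t => deriv (fun s => f x s) t

section NLSAux

set_option linter.unusedSectionVars false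
set_option linter.unusedVariables false

/-! ### Pure matrix algebra lemmas -/

private lemma hqd_sq {n : ℕ} {K c a ξ p : Matrix (Fin n) (Fin n) ℂ}
    (hK : Kᴴ = K) (hc : cᴴ = c)
    (hpg : p * (a - c * ξ * K) = 1) (hgp : (a - c * ξ * K) * p = 1)
    (hξa : ξᴴ * a = 1) (haξ : a * ξᴴ = 1) :
    pᴴ = ξ + ξ * K * p * (c * ξ) := by
  have hpg' : pᴴ * (a - c * ξ * K)ᴴ = 1 := by
    rw [← conjTranspose_mul, hgp, conjTranspose_one]
  have hgH : (a - c * ξ * K)ᴴ = aᴴ - K * ξᴴ * c := by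
    simp only [conjTranspose_sub, conjTranspose_mul, hK, hc, Matrix.mul_assoc]
  have haH1 : aᴴ * ξ = 1 := by
    have := congrArg conjTranspose hξa
    simpa [conjTranspose_mul] using this
  have key : (a - c * ξ * K)ᴴ * (ξ + ξ * K * p * (c * ξ)) = 1 := by
    rw [hgH]
    have e1 : (aᴴ - K * ξᴴ * c) * (ξ + ξ * K * p * (c * ξ))
        = (aᴴ * ξ) + (aᴴ * ξ) * (K * p * (c * ξ)) - K * ξᴴ * (c * ξ)
          - K * (ξᴴ * a) * (p * (c * ξ)) + K * ξᴴ * (((a - c * ξ * K) * p) * (c * ξ)) := by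
      noncomm_ring
    rw [e1, haH1, hξa, hgp]
    noncomm_ring
  calc pᴴ = pᴴ * ((a - c * ξ * K)ᴴ * (ξ + ξ * K * p * (c * ξ))) := by rw [key, mul_one]
    _ = (pᴴ * (a - c * ξ * K)ᴴ) * (ξ + ξ * K * p * (c * ξ)) := (Matrix.mul_assoc _ _ _).symm
    _ = ξ + ξ * K * p * (c * ξ) := by rw [hpg', one_mul]

private lemma key_sq {n : ℕ} {S K c a ξ p W1 W2 : Matrix (Fin n) (Fin n) ℂ}
    (hL1 : S * K + K * Sᴴ = W1) (hL2 : Sᴴ * c + c * S = W2)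
    (haS : a * Sᴴ = Sᴴ * a) (hξS : ξ * S = S * ξ)
    (hpg : p * (a - c * ξ * K) = 1) (hgp : (a - c * ξ * K) * p = 1) :
    (Sᴴ*a - c*((-S)*ξ)*K) * p * (Sᴴ*a - c*((-S)*ξ)*K) - (Sᴴ*(Sᴴ*a) - c*((-S)*((-S)*ξ))*K)
      = W2 * (ξ + ξ * K * p * (c * ξ)) * W1 := by
  have e1 : Sᴴ*a - c*((-S)*ξ)*K = Sᴴ*(a - c*ξ*K) + W2*(ξ*K) := by
    rw [← hL2]; noncomm_ring
  have e2 : Sᴴ*a - c*((-S)*ξ)*K = (a - c*ξ*K)*Sᴴ + c*(ξ*W1) := by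
    rw [← hL1]
    calc Sᴴ*a - c*((-S)*ξ)*K = (Sᴴ*a) + c*((S*ξ)*K) := by noncomm_ring
      _ = (a*Sᴴ) + c*((ξ*S)*K) := by rw [haS, hξS]
      _ = (a - c*ξ*K)*Sᴴ + c*(ξ*(S*K + K*Sᴴ)) := by noncomm_ring
  have e3 : Sᴴ*(Sᴴ*a) - c*((-S)*((-S)*ξ))*K = Sᴴ*(Sᴴ*a - c*((-S)*ξ)*K) - W2*((S*ξ)*K) := by
    rw [← hL2]; noncomm_ring
  rw [e3]
  nth_rewrite 1 [e1]
  rw [e2]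
  set g := a - c*ξ*K with hg
  calc (Sᴴ*g + W2*(ξ*K)) * p * (g*Sᴴ + c*(ξ*W1)) - (Sᴴ*(g*Sᴴ + c*(ξ*W1)) - W2*((S*ξ)*K))
      = Sᴴ*((g*p)*g)*Sᴴ + Sᴴ*(g*p)*(c*(ξ*W1)) + W2*(ξ*K)*(p*g)*Sᴴ
        + W2*((ξ*K)*p*(c*ξ))*W1 - Sᴴ*g*Sᴴ - Sᴴ*(c*(ξ*W1)) + W2*((S*ξ)*K) := by noncomm_ring
    _ = W2*(ξ*K)*Sᴴ + W2*((S*ξ)*K) + W2*((ξ*K)*p*(c*ξ))*W1 := by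
        rw [hgp, hpg]; noncomm_ring
    _ = W2*(ξ*(S*K + K*Sᴴ)) + W2*((ξ*K)*p*(c*ξ))*W1 := by
        rw [← hξS]; noncomm_ring
    _ = W2 * (ξ + ξ * K * p * (c * ξ)) * W1 := by rw [hL1]; noncomm_ring

private lemma core {n m1 m2 : ℕ} {S K c a ξ p : Matrix (Fin n) (Fin n) ℂ}
    {V : Matrix (Fin n) (Fin m1) ℂ} {Vb : Matrix (Fin n) (Fin m2) ℂ} {ε : ℂ}
    (hK : Kᴴ = K) (hc : cᴴ = c)
    (hL1 : S * K + K * Sᴴ = V * Vᴴ) (hL2 : Sᴴ * c + c * S = ε • (Vb * Vbᴴ))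
    (haS : a * Sᴴ = Sᴴ * a) (hξS : ξ * S = S * ξ)
    (hpg : p * (a - c * ξ * K) = 1) (hgp : (a - c * ξ * K) * p = 1)
    (hξa : ξᴴ * a = 1) (haξ : a * ξᴴ = 1) :
    Complex.I • (Vᴴ * (-(p * (((-Complex.I)•(Sᴴ*Sᴴ))*a - c*(((-Complex.I)•(S*S))*ξ)*K) * p)) * Vb)
    + Vᴴ * (-((-(p * (Sᴴ*a - c*((-S)*ξ)*K) * p)) * (Sᴴ*a - c*((-S)*ξ)*K) * p
          + p * (Sᴴ*(Sᴴ*a) - c*((-S)*((-S)*ξ))*K) * p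
          + p * (Sᴴ*a - c*((-S)*ξ)*K) * (-(p * (Sᴴ*a - c*((-S)*ξ)*K) * p)))) * Vb
    - (2*ε) • ((Vᴴ*p*Vb) * (Vᴴ*p*Vb)ᴴ * (Vᴴ*p*Vb)) = 0 := by
  set gx := Sᴴ*a - c*((-S)*ξ)*K with hgx
  set gxx := Sᴴ*(Sᴴ*a) - c*((-S)*((-S)*ξ))*K with hgxx
  have hqd := hqd_sq hK hc hpg hgp hξa haξ
  have hkey := key_sq (W1 := V * Vᴴ) (W2 := ε • (Vb * Vbᴴ)) hL1 hL2 haS hξS hpg hgp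
  have hgt : ((-Complex.I)•(Sᴴ*Sᴴ))*a - c*(((-Complex.I)•(S*S))*ξ)*K = (-Complex.I) • gxx := by
    rw [hgxx]
    simp only [Matrix.smul_mul, Matrix.mul_smul, smul_sub, Matrix.mul_assoc, neg_mul, mul_neg,
      neg_neg]
  rw [hgt]
  have t1 : -(p * ((-Complex.I) • gxx) * p) = Complex.I • (p * gxx * p) := by
    simp only [Matrix.smul_mul, Matrix.mul_smul, neg_smul, neg_neg, Matrix.mul_neg,
      Matrix.neg_mul]
  rw [t1]
  have t2 : Complex.I • (Vᴴ * (Complex.I • (p * gxx * p)) * Vb)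
      = -(Vᴴ * (p * gxx * p) * Vb) := by
    simp only [Matrix.smul_mul, Matrix.mul_smul, smul_smul, Complex.I_mul_I, neg_one_smul]
  rw [t2]
  have t3 : -((-(p * gx * p)) * gx * p + p * gxx * p + p * gx * (-(p * gx * p)))
      = p * (gx * p * gx - gxx) * p + p * (gx * p * gx - gxx) * p + p * gxx * p := by
    noncomm_ring
  rw [t3, hkey]
  have t4 : Vᴴ * (p * ((ε • (Vb * Vbᴴ)) * (ξ + ξ * K * p * (c * ξ)) * (V * Vᴴ)) * p) * Vb
      = ε • ((Vᴴ*p*Vb) * (Vbᴴ * (ξ + ξ * K * p * (c * ξ)) * V) * (Vᴴ*p*Vb)) := by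
    simp only [Matrix.smul_mul, Matrix.mul_smul, Matrix.mul_assoc]
  have t5 : (Vᴴ*p*Vb)ᴴ = Vbᴴ * (ξ + ξ * K * p * (c * ξ)) * V := by
    rw [conjTranspose_mul, conjTranspose_mul, conjTranspose_conjTranspose, hqd,
      Matrix.mul_assoc]
    exact (Matrix.mul_assoc _ _ _).symm
  rw [Matrix.mul_add, Matrix.add_mul, Matrix.mul_add, Matrix.add_mul, t4, t5]
  have t6 : (2*ε) • ((Vᴴ*p*Vb) * (Vbᴴ * (ξ + ξ * K * p * (c * ξ)) * V) * (Vᴴ*p*Vb))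
      = ε • ((Vᴴ*p*Vb) * (Vbᴴ * (ξ + ξ * K * p * (c * ξ)) * V) * (Vᴴ*p*Vb))
        + ε • ((Vᴴ*p*Vb) * (Vbᴴ * (ξ + ξ * K * p * (c * ξ)) * V) * (Vᴴ*p*Vb)) := by
    rw [two_mul, add_smul]
  rw [t6]
  abel

end NLSAux

/-! ### Abstract Banach-algebra derivative lemmas -/

section AbstractAux
open NormedSpace
variable {A : Type*} [NormedRing A] [NormedAlgebra ℝ A] [CompleteSpace A]

private theorem aux_exp_add {a b : A} (h : Commute a b) : exp (a + b) = exp a * exp b :=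
  exp_add_of_commute_of_mem_ball (𝕂 := ℝ) h
    ((expSeries_radius_eq_top ℝ A).symm ▸ edist_lt_top _ _)
    ((expSeries_radius_eq_top ℝ A).symm ▸ edist_lt_top _ _)

private theorem aux_exp_deriv_x (a b : A) (h : Commute a b) (x t : ℝ) :
    HasDerivAt (fun y : ℝ => exp (y•a + t•b)) (a * exp (x•a + t•b)) x := by
  have h1 := (hasDerivAt_exp_smul_const' (𝕂 := ℝ) a x).mul_const (exp (t•b))
  have e : (fun y : ℝ => exp (y•a + t•b)) = fun y => exp (y•a) * exp (t•b) :=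
    funext fun y => aux_exp_add ((h.smul_left y).smul_right t)
  rw [e, aux_exp_add ((h.smul_left x).smul_right t), ← mul_assoc]
  exact h1

private theorem aux_exp_deriv_t (a b : A) (h : Commute a b) (x t : ℝ) :
    HasDerivAt (fun s : ℝ => exp (x•a + s•b)) (b * exp (x•a + t•b)) t := by
  have h1 := (hasDerivAt_exp_smul_const' (𝕂 := ℝ) b t).mul_const (exp (x•a))
  have e : (fun s : ℝ => exp (x•a + s•b)) = fun s => exp (s•b) * exp (x•a) := by
    funext s
    rw [add_comm]
    exact aux_exp_add ((h.symm.smul_left s).smul_right x)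
  rw [e, add_comm, aux_exp_add ((h.symm.smul_left t).smul_right x), ← mul_assoc]
  exact h1

private theorem aux_inv_deriv {g : ℝ → A} {g' : A} {x : ℝ} (hg : HasDerivAt g g' x)
    (hu : IsUnit (g x)) :
    HasDerivAt (fun y => Ring.inverse (g y))
      (-(Ring.inverse (g x) * g' * Ring.inverse (g x))) x := by
  obtain ⟨u, hu'⟩ := hu
  have hF := hasFDerivAt_ringInverse (𝕜 := ℝ) u
  rw [hu'] at hF
  have h2 := hF.comp_hasDerivAt x hg
  have e : (Ring.inverse (g x) : A) = ↑u⁻¹ := by rw [← hu', Ring.inverse_unit]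
  rw [e]
  exact h2

private theorem aux_exp_cd (a b : A) :
    ContDiff ℝ (⊤ : WithTop ℕ∞) (fun z : ℝ × ℝ => exp (z.1•a + z.2•b)) := by
  rw [contDiff_omega_iff_analyticOnNhd]
  intro z _
  have h1 : AnalyticAt ℝ (fun w : A => exp w) (z.1•a + z.2•b) := exp_analytic _
  have h2 : AnalyticAt ℝ (fun z : ℝ × ℝ => z.1•a + z.2•b) z :=
    (((ContinuousLinearMap.fst ℝ ℝ ℝ).smulRight a
      + (ContinuousLinearMap.snd ℝ ℝ ℝ).smulRight b).analyticAt z)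
  have := AnalyticAt.comp (g := fun w : A => exp w)
    (f := fun z : ℝ × ℝ => z.1•a + z.2•b) h1 h2
  exact this

private theorem aux_inv_cd {g : ℝ × ℝ → A} (hg : ContDiff ℝ (⊤ : WithTop ℕ∞) g)
    (hu : ∀ z, IsUnit (g z)) :
    ContDiff ℝ (⊤ : WithTop ℕ∞) (fun z => Ring.inverse (g z)) := by
  rw [contDiff_omega_iff_analyticOnNhd] at hg ⊢
  intro z hz
  have h1 : AnalyticAt ℝ (fun w : A => Ring.inverse w) (g z) := by
    have := analyticAt_inverse (𝕜 := ℝ) (hu z).unit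
    simpa using this
  have := AnalyticAt.comp (g := fun w : A => Ring.inverse w) (f := g) h1 (hg z hz)
  exact this

private theorem aux_commute_exp (a b w : A) (ha : Commute w a) (hb : Commute w b) (x t : ℝ) :
    Commute w (exp (x•a + t•b)) :=
  (((ha.symm.smul_left x).add_left ((hb.symm.smul_left t))).exp_left).symm
end AbstractAux

/-! ### Matrix-valued function definitions -/

private noncomputable def mexp {n : ℕ} (a b : Matrix (Fin n) (Fin n) ℂ) (x t : ℝ) :
    Matrix (Fin n) (Fin n) ℂ := NormedSpace.exp (x•a + t•b)

private noncomputable def gfun {n : ℕ} (a b a' b' c d : Matrix (Fin n) (Fin n) ℂ) (x t : ℝ) :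
    Matrix (Fin n) (Fin n) ℂ := mexp a b x t - c * mexp a' b' x t * d

private noncomputable def pfun {n : ℕ} (a b a' b' c d : Matrix (Fin n) (Fin n) ℂ) (x t : ℝ) :
    Matrix (Fin n) (Fin n) ℂ := Ring.inverse (gfun a b a' b' c d x t)

private noncomputable def gxfun {n : ℕ} (a b a' b' c d : Matrix (Fin n) (Fin n) ℂ) (x t : ℝ) :
    Matrix (Fin n) (Fin n) ℂ := a * mexp a b x t - c * (a' * mexp a' b' x t) * d

private noncomputable def gtfun {n : ℕ} (a b a' b' c d : Matrix (Fin n) (Fin n) ℂ) (x t : ℝ) :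
    Matrix (Fin n) (Fin n) ℂ := b * mexp a b x t - c * (b' * mexp a' b' x t) * d

private noncomputable def gxxfun {n : ℕ} (a b a' b' c d : Matrix (Fin n) (Fin n) ℂ) (x t : ℝ) :
    Matrix (Fin n) (Fin n) ℂ := a * (a * mexp a b x t) - c * (a' * (a' * mexp a' b' x t)) * d

private theorem mexp_conjT {n : ℕ} (a b : Matrix (Fin n) (Fin n) ℂ) (x t : ℝ) :
    (mexp a b x t)ᴴ = mexp aᴴ bᴴ x t := by
  unfold mexp
  rw [← Matrix.exp_conjTranspose]
  congr 1
  ext i j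
  simp [Matrix.conjTranspose_apply, Matrix.add_apply, Matrix.smul_apply, Complex.real_smul]

private theorem mexp_mul_inv {n : ℕ} (a b : Matrix (Fin n) (Fin n) ℂ) (h : Commute a b)
    (x t : ℝ) : mexp a b x t * mexp (-a) (-b) x t = 1 := by
  unfold mexp
  have hc : Commute (x•a + t•b) (x•(-a) + t•(-b)) := by
    refine Commute.add_left (Commute.add_right ?_ ?_) (Commute.add_right ?_ ?_)
    · exact (((Commute.refl a).neg_right).smul_right x).smul_left x
    · exact ((h.neg_right).smul_right t).smul_left x
    · exact ((h.symm.neg_right).smul_right x).smul_left t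
    · exact (((Commute.refl b).neg_right).smul_right t).smul_left t
  rw [← Matrix.exp_add_of_commute _ _ hc]
  have e : x•a + t•b + (x•(-a) + t•(-b)) = 0 := by
    simp [smul_neg]
    abel
  rw [e, NormedSpace.exp_zero]

/-! ### Derivative facts, proved with the L∞ operator norm, stated entrywise -/

section Linfty
set_option linter.unusedSectionVars false
attribute [-instance] Matrix.normedAddCommGroup Matrix.normedSpace
attribute [local instance] Matrix.linftyOpNormedRing Matrix.linftyOpNormedAlgebra

variable {n : ℕ} (a b a' b' c d : Matrix (Fin n) (Fin n) ℂ)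

private theorem L0g (h1 : Commute a b) (h2 : Commute a' b') (x t : ℝ) :
    HasDerivAt (fun y => gfun a b a' b' c d y t) (gxfun a b a' b' c d x t) x := by
  have hA := aux_exp_deriv_x a b h1 x t
  have hX := aux_exp_deriv_x a' b' h2 x t
  exact hA.sub (((hX.const_mul c).mul_const d))

private theorem L0gt (h1 : Commute a b) (h2 : Commute a' b') (x t : ℝ) :
    HasDerivAt (fun s => gfun a b a' b' c d x s) (gtfun a b a' b' c d x t) t := by
  have hA := aux_exp_deriv_t a b h1 x t
  have hX := aux_exp_deriv_t a' b' h2 x t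
  exact hA.sub (((hX.const_mul c).mul_const d))

private theorem L0p (h1 : Commute a b) (h2 : Commute a' b')
    (hu : ∀ x t : ℝ, IsUnit (gfun a b a' b' c d x t)) (x t : ℝ) :
    HasDerivAt (fun y => pfun a b a' b' c d y t)
      (-(pfun a b a' b' c d x t * gxfun a b a' b' c d x t * pfun a b a' b' c d x t)) x :=
  aux_inv_deriv (L0g a b a' b' c d h1 h2 x t) (hu x t)

private theorem L0pt (h1 : Commute a b) (h2 : Commute a' b')
    (hu : ∀ x t : ℝ, IsUnit (gfun a b a' b' c d x t)) (x t : ℝ) :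
    HasDerivAt (fun s => pfun a b a' b' c d x s)
      (-(pfun a b a' b' c d x t * gtfun a b a' b' c d x t * pfun a b a' b' c d x t)) t :=
  aux_inv_deriv (L0gt a b a' b' c d h1 h2 x t) (hu x t)

private theorem L0r (h1 : Commute a b) (h2 : Commute a' b')
    (hu : ∀ x t : ℝ, IsUnit (gfun a b a' b' c d x t)) (x t : ℝ) :
    HasDerivAt (fun y => pfun a b a' b' c d y t * gxfun a b a' b' c d y t * pfun a b a' b' c d y t)
      ((-(pfun a b a' b' c d x t * gxfun a b a' b' c d x t * pfun a b a' b' c d x t))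
          * gxfun a b a' b' c d x t * pfun a b a' b' c d x t
        + pfun a b a' b' c d x t * gxxfun a b a' b' c d x t * pfun a b a' b' c d x t
        + pfun a b a' b' c d x t * gxfun a b a' b' c d x t
          * (-(pfun a b a' b' c d x t * gxfun a b a' b' c d x t * pfun a b a' b' c d x t))) x := by
  have hp := L0p a b a' b' c d h1 h2 hu x t
  have hgx : HasDerivAt (fun y => gxfun a b a' b' c d y t) (gxxfun a b a' b' c d x t) x := by
    have hA := (aux_exp_deriv_x a b h1 x t).const_mul a
    have hX := ((aux_exp_deriv_x a' b' h2 x t).const_mul a').const_mul c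
    exact hA.sub (hX.mul_const d)
  have := (hp.mul hgx).mul hp
  refine HasDerivAt.congr_deriv this ?_
  simp only [Pi.mul_apply]
  noncomm_ring

private theorem L0cd (hu : ∀ x t : ℝ, IsUnit (gfun a b a' b' c d x t)) :
    ContDiff ℝ (⊤ : WithTop ℕ∞) (fun z : ℝ × ℝ => pfun a b a' b' c d z.1 z.2) := by
  have hg : ContDiff ℝ (⊤ : WithTop ℕ∞) (fun z : ℝ × ℝ => gfun a b a' b' c d z.1 z.2) := by
    have h1 := aux_exp_cd a b
    have h2 := aux_exp_cd a' b'
    exact h1.sub ((contDiff_const.mul h2).mul contDiff_const)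
  exact aux_inv_cd hg (fun z => hu z.1 z.2)

private theorem L1p (h1 : Commute a b) (h2 : Commute a' b')
    (hu : ∀ x t : ℝ, IsUnit (gfun a b a' b' c d x t)) (x t : ℝ) (i j : Fin n) :
    HasDerivAt (fun y => pfun a b a' b' c d y t i j)
      ((-(pfun a b a' b' c d x t * gxfun a b a' b' c d x t * pfun a b a' b' c d x t)) i j) x := by
  have h := L0p a b a' b' c d h1 h2 hu x t
  let L : Matrix (Fin n) (Fin n) ℂ →ₗ[ℝ] ℂ :=
    { toFun := fun M => M i j, map_add' := fun _ _ => rfl, map_smul' := fun _ _ => rfl }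
  exact (LinearMap.toContinuousLinearMap L).hasFDerivAt.comp_hasDerivAt x h

private theorem L1pt (h1 : Commute a b) (h2 : Commute a' b')
    (hu : ∀ x t : ℝ, IsUnit (gfun a b a' b' c d x t)) (x t : ℝ) (i j : Fin n) :
    HasDerivAt (fun s => pfun a b a' b' c d x s i j)
      ((-(pfun a b a' b' c d x t * gtfun a b a' b' c d x t * pfun a b a' b' c d x t)) i j) t := by
  have h := L0pt a b a' b' c d h1 h2 hu x t
  let L : Matrix (Fin n) (Fin n) ℂ →ₗ[ℝ] ℂ :=
    { toFun := fun M => M i j, map_add' := fun _ _ => rfl, map_smul' := fun _ _ => rfl }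
  exact (LinearMap.toContinuousLinearMap L).hasFDerivAt.comp_hasDerivAt t h

private theorem L1r (h1 : Commute a b) (h2 : Commute a' b')
    (hu : ∀ x t : ℝ, IsUnit (gfun a b a' b' c d x t)) (x t : ℝ) (i j : Fin n) :
    HasDerivAt
      (fun y => (pfun a b a' b' c d y t * gxfun a b a' b' c d y t * pfun a b a' b' c d y t) i j)
      (((-(pfun a b a' b' c d x t * gxfun a b a' b' c d x t * pfun a b a' b' c d x t))
          * gxfun a b a' b' c d x t * pfun a b a' b' c d x t
        + pfun a b a' b' c d x t * gxxfun a b a' b' c d x t * pfun a b a' b' c d x t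
        + pfun a b a' b' c d x t * gxfun a b a' b' c d x t
          * (-(pfun a b a' b' c d x t * gxfun a b a' b' c d x t * pfun a b a' b' c d x t))) i j)
      x := by
  have h := L0r a b a' b' c d h1 h2 hu x t
  let L : Matrix (Fin n) (Fin n) ℂ →ₗ[ℝ] ℂ :=
    { toFun := fun M => M i j, map_add' := fun _ _ => rfl, map_smul' := fun _ _ => rfl }
  exact (LinearMap.toContinuousLinearMap L).hasFDerivAt.comp_hasDerivAt x h

private theorem L1cd (hu : ∀ x t : ℝ, IsUnit (gfun a b a' b' c d x t)) (i j : Fin n) :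
    ContDiff ℝ (⊤ : WithTop ℕ∞) (fun z : ℝ × ℝ => pfun a b a' b' c d z.1 z.2 i j) := by
  have h := L0cd a b a' b' c d hu
  let L : Matrix (Fin n) (Fin n) ℂ →ₗ[ℝ] ℂ :=
    { toFun := fun M => M i j, map_add' := fun _ _ => rfl, map_smul' := fun _ _ => rfl }
  exact (LinearMap.toContinuousLinearMap L).contDiff.comp h

private theorem L1commute (w : Matrix (Fin n) (Fin n) ℂ) (ha : Commute w a) (hb : Commute w b)
    (x t : ℝ) : Commute w (mexp a b x t) := by
  unfold mexp
  exact aux_commute_exp a b w ha hb x t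

end Linfty

/-! ### Rebuilding sup-norm facts from entrywise facts -/

private theorem rebuild_deriv {n m : ℕ} {f : ℝ → Matrix (Fin n) (Fin m) ℂ}
    {f' : Matrix (Fin n) (Fin m) ℂ} {x : ℝ}
    (h : ∀ i j, HasDerivAt (fun y => f y i j) (f' i j) x) : HasDerivAt f f' x :=
  hasDerivAt_pi.2 fun i => hasDerivAt_pi.2 fun j => h i j

private theorem rebuild_cd {n m : ℕ} {f : ℝ × ℝ → Matrix (Fin n) (Fin m) ℂ}
    (h : ∀ i j, ContDiff ℝ (⊤ : WithTop ℕ∞) (fun z => f z i j)) :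
    ContDiff ℝ (⊤ : WithTop ℕ∞) f :=
  contDiff_pi.2 fun i => contDiff_pi.2 fun j => h i j

private theorem sandwich_deriv {n m1 m2 : ℕ} (V : Matrix (Fin n) (Fin m1) ℂ)
    (Vb : Matrix (Fin n) (Fin m2) ℂ) {f : ℝ → Matrix (Fin n) (Fin n) ℂ}
    {f' : Matrix (Fin n) (Fin n) ℂ} {x : ℝ} (h : HasDerivAt f f' x) :
    HasDerivAt (fun y => Vᴴ * f y * Vb) (Vᴴ * f' * Vb) x := by
  let L : Matrix (Fin n) (Fin n) ℂ →ₗ[ℝ] Matrix (Fin m1) (Fin m2) ℂ :=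
    { toFun := fun M => Vᴴ * M * Vb,
      map_add' := fun M N => by simp only [Matrix.mul_add, Matrix.add_mul],
      map_smul' := fun r M => by
        simp only [Matrix.mul_smul, Matrix.smul_mul, RingHom.id_apply] }
  exact (LinearMap.toContinuousLinearMap L).hasFDerivAt.comp_hasDerivAt x h

private theorem sandwich_cd {n m1 m2 : ℕ} (V : Matrix (Fin n) (Fin m1) ℂ)
    (Vb : Matrix (Fin n) (Fin m2) ℂ) {f : ℝ × ℝ → Matrix (Fin n) (Fin n) ℂ}
    (h : ContDiff ℝ (⊤ : WithTop ℕ∞) f) :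
    ContDiff ℝ (⊤ : WithTop ℕ∞) (fun z => Vᴴ * f z * Vb) := by
  let L : Matrix (Fin n) (Fin n) ℂ →ₗ[ℝ] Matrix (Fin m1) (Fin m2) ℂ :=
    { toFun := fun M => Vᴴ * M * Vb,
      map_add' := fun M N => by simp only [Matrix.mul_add, Matrix.add_mul],
      map_smul' := fun r M => by
        simp only [Matrix.mul_smul, Matrix.smul_mul, RingHom.id_apply] }
  exact (LinearMap.toContinuousLinearMap L).contDiff.comp h

/-- Solutions of the matrix NLS equation obtained via the Hermitian conjugation
reduction, from Hermitian solutions of Lyapunov equations. -/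
theorem matrix_NLS_hermitian_reduction_solutions
    {n m1 m2 : ℕ}
    (S : Matrix (Fin n) (Fin n) ℂ)
    (V : Matrix (Fin n) (Fin m1) ℂ) (Vb : Matrix (Fin n) (Fin m2) ℂ)
    (K Kb : Matrix (Fin n) (Fin n) ℂ)
    (ε : ℂ) (hε : ε = 1 ∨ ε = -1)
    (hKherm : Kᴴ = K) (hKbherm : Kbᴴ = Kb)
    (hLyap : S * K + K * Sᴴ = V * Vᴴ)
    (hLyapb : Sᴴ * Kb + Kb * S = Vb * Vbᴴ)
    (Ξ : ℝ → ℝ → Matrix (Fin n) (Fin n) ℂ)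
    (hΞ : ∀ x t : ℝ, Ξ x t = NormedSpace.exp ((-(x : ℂ)) • S - (Complex.I * t) • (S * S)))
    (hinv : ∀ x t : ℝ, IsUnit (((Ξ x t)ᴴ)⁻¹ - ε • (Kb * Ξ x t * K)))
    (q : ℝ → ℝ → Matrix (Fin m1) (Fin m2) ℂ)
    (hq : ∀ x t : ℝ, q x t = Vᴴ * (((Ξ x t)ᴴ)⁻¹ - ε • (Kb * Ξ x t * K))⁻¹ * Vb) :
    ContDiff ℝ (⊤ : ℕ∞) (fun z : ℝ × ℝ => q z.1 z.2) ∧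
    (∀ x t : ℝ,
      Complex.I • pdt q x t + pdx (pdx q) x t
        - (2 * ε) • (q x t * (q x t)ᴴ * q x t) = 0) := by
  classical
  set b1 : Matrix (Fin n) (Fin n) ℂ := (-Complex.I) • (Sᴴ * Sᴴ) with hb1
  set b2 : Matrix (Fin n) (Fin n) ℂ := (-Complex.I) • (S * S) with hb2
  set c : Matrix (Fin n) (Fin n) ℂ := ε • Kb with hcdef
  have com1 : Commute Sᴴ b1 := (((Commute.refl Sᴴ).mul_right (Commute.refl Sᴴ)).smul_right _)
  have com2 : Commute (-S) b2 :=
    ((((Commute.refl S).mul_right (Commute.refl S)).smul_right _).neg_left)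
  -- identification of Ξ with mexp
  have F1 : ∀ x t : ℝ, Ξ x t = mexp (-S) b2 x t := by
    intro x t
    rw [hΞ]
    unfold mexp
    congr 1
    ext i j
    simp only [Matrix.sub_apply, Matrix.add_apply, Matrix.smul_apply, Matrix.neg_apply,
      Complex.real_smul, smul_eq_mul, hb2, Complex.ofReal_neg]
    ring
  have e2 : b2ᴴ = -b1 := by
    rw [hb2, hb1, Matrix.conjTranspose_smul, conjTranspose_mul]
    have : star (-Complex.I) = Complex.I := by simp
    rw [this, neg_smul, neg_neg]
  have hconj : ∀ x t : ℝ, (mexp (-S) b2 x t)ᴴ = mexp (-Sᴴ) (-b1) x t := by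
    intro x t
    rw [mexp_conjT, conjTranspose_neg, e2]
  have hinv1 : ∀ x t : ℝ, mexp Sᴴ b1 x t * (mexp (-S) b2 x t)ᴴ = 1 := by
    intro x t
    rw [hconj]
    exact mexp_mul_inv Sᴴ b1 com1 x t
  have hinv2 : ∀ x t : ℝ, (mexp (-S) b2 x t)ᴴ * mexp Sᴴ b1 x t = 1 := by
    intro x t
    rw [hconj]
    have := mexp_mul_inv (-Sᴴ) (-b1) (com1.neg_left.neg_right) x t
    simpa using this
  have F2 : ∀ x t : ℝ, ((Ξ x t)ᴴ)⁻¹ = mexp Sᴴ b1 x t := by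
    intro x t
    rw [F1 x t, hconj]
    refine Matrix.inv_eq_right_inv ?_
    have := hinv2 x t
    rwa [hconj] at this
  have hgeq : ∀ x t : ℝ, gfun Sᴴ b1 (-S) b2 c K x t
      = ((Ξ x t)ᴴ)⁻¹ - ε • (Kb * Ξ x t * K) := by
    intro x t
    rw [F2, F1]
    unfold gfun
    congr 1
    rw [hcdef, Matrix.smul_mul, Matrix.smul_mul]
  have hu : ∀ x t : ℝ, IsUnit (gfun Sᴴ b1 (-S) b2 c K x t) := by
    intro x t
    rw [hgeq x t]
    exact hinv x t
  have F4 : ∀ x t : ℝ, q x t = Vᴴ * pfun Sᴴ b1 (-S) b2 c K x t * Vb := by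
    intro x t
    rw [hq]
    unfold pfun
    rw [← hgeq x t, Matrix.nonsing_inv_eq_ringInverse]
  -- hypotheses for the algebraic core
  have hcc : cᴴ = c := by
    rw [hcdef, Matrix.conjTranspose_smul, hKbherm]
    rcases hε with rfl | rfl <;> simp
  have hL2c : Sᴴ * c + c * S = ε • (Vb * Vbᴴ) := by
    rw [hcdef, Matrix.mul_smul, Matrix.smul_mul, ← smul_add, hLyapb]
  have com2' : Commute S b2 :=
    ((Commute.refl S).mul_right (Commute.refl S)).smul_right _
  have haS : ∀ x t : ℝ, mexp Sᴴ b1 x t * Sᴴ = Sᴴ * mexp Sᴴ b1 x t := fun x t =>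
    (L1commute Sᴴ b1 Sᴴ (Commute.refl Sᴴ) com1 x t).eq.symm
  have hξS : ∀ x t : ℝ, mexp (-S) b2 x t * S = S * mexp (-S) b2 x t := fun x t =>
    (L1commute (-S) b2 S ((Commute.refl S).neg_right) com2' x t).eq.symm
  have hpg : ∀ x t : ℝ, pfun Sᴴ b1 (-S) b2 c K x t
      * (mexp Sᴴ b1 x t - c * mexp (-S) b2 x t * K) = 1 := by
    intro x t
    have := Ring.inverse_mul_cancel _ (hu x t)
    exact this
  have hgp : ∀ x t : ℝ, (mexp Sᴴ b1 x t - c * mexp (-S) b2 x t * K)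
      * pfun Sᴴ b1 (-S) b2 c K x t = 1 := by
    intro x t
    have := Ring.mul_inverse_cancel _ (hu x t)
    exact this
  -- derivative computations
  have HD1 : ∀ x t : ℝ, deriv (fun y => q y t) x
      = Vᴴ * (-(pfun Sᴴ b1 (-S) b2 c K x t * gxfun Sᴴ b1 (-S) b2 c K x t
          * pfun Sᴴ b1 (-S) b2 c K x t)) * Vb := by
    intro x t
    have hfun : (fun y => q y t) = fun y => Vᴴ * pfun Sᴴ b1 (-S) b2 c K y t * Vb :=
      funext fun y => F4 y t
    rw [hfun]
    exact (sandwich_deriv V Vb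
      (rebuild_deriv (fun i j => L1p Sᴴ b1 (-S) b2 c K com1 com2 hu x t i j))).deriv
  have HDT : ∀ x t : ℝ, deriv (fun s => q x s) t
      = Vᴴ * (-(pfun Sᴴ b1 (-S) b2 c K x t * gtfun Sᴴ b1 (-S) b2 c K x t
          * pfun Sᴴ b1 (-S) b2 c K x t)) * Vb := by
    intro x t
    have hfun : (fun s => q x s) = fun s => Vᴴ * pfun Sᴴ b1 (-S) b2 c K x s * Vb :=
      funext fun s => F4 x s
    rw [hfun]
    exact (sandwich_deriv V Vb
      (rebuild_deriv (fun i j => L1pt Sᴴ b1 (-S) b2 c K com1 com2 hu x t i j))).deriv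
  have HD2 : ∀ x t : ℝ, deriv (fun y => deriv (fun y2 => q y2 t) y) x
      = Vᴴ * (-((-(pfun Sᴴ b1 (-S) b2 c K x t * gxfun Sᴴ b1 (-S) b2 c K x t
              * pfun Sᴴ b1 (-S) b2 c K x t))
            * gxfun Sᴴ b1 (-S) b2 c K x t * pfun Sᴴ b1 (-S) b2 c K x t
          + pfun Sᴴ b1 (-S) b2 c K x t * gxxfun Sᴴ b1 (-S) b2 c K x t
            * pfun Sᴴ b1 (-S) b2 c K x t
          + pfun Sᴴ b1 (-S) b2 c K x t * gxfun Sᴴ b1 (-S) b2 c K x t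
            * (-(pfun Sᴴ b1 (-S) b2 c K x t * gxfun Sᴴ b1 (-S) b2 c K x t
              * pfun Sᴴ b1 (-S) b2 c K x t)))) * Vb := by
    intro x t
    have hfun : (fun y => deriv (fun y2 => q y2 t) y)
        = fun y => Vᴴ * (-(pfun Sᴴ b1 (-S) b2 c K y t * gxfun Sᴴ b1 (-S) b2 c K y t
            * pfun Sᴴ b1 (-S) b2 c K y t)) * Vb :=
      funext fun y => HD1 y t
    rw [hfun]
    have hmat := (rebuild_deriv
      (fun i j => L1r Sᴴ b1 (-S) b2 c K com1 com2 hu x t i j)).neg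
    exact (sandwich_deriv V Vb hmat).deriv
  constructor
  · have hfun : (fun z : ℝ × ℝ => q z.1 z.2)
        = fun z => Vᴴ * pfun Sᴴ b1 (-S) b2 c K z.1 z.2 * Vb :=
      funext fun z => F4 z.1 z.2
    rw [hfun]
    exact (sandwich_cd V Vb (rebuild_cd (fun i j => L1cd Sᴴ b1 (-S) b2 c K hu i j))).of_le le_top
  · intro x t
    have hcore := core (p := pfun Sᴴ b1 (-S) b2 c K x t) hKherm hcc hLyap hL2c
      (haS x t) (hξS x t) (hpg x t) (hgp x t) (hinv2 x t) (hinv1 x t)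
    rw [← hb1, ← hb2] at hcore
    simp only [pdx, pdt]
    erw [HDT x t, HD2 x t, F4 x t]
    simp only [gtfun, gxfun, gxxfun]
    exact hcore
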